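/- arXiv:2111.14492 — 2 statements merged into one kernel-verified Lean document; each statement's English description precedes it below -/
import Mathlib

section
/- For every natural number k ≥ 1, the formal power series Σ_{n≥0} r_{2k}(n)·x^{n+k-1} equals ∏_{j=0}^{k-1} (j!/(k+j)!) times the power series expansion at 0 of the rational function F_k^k(x). -/
/-- The value `r_k(n) = ∏_{j=1}^k ((n+j)/j)^(min(j,k-j))` of the polynomial `r_k`
at the natural number `n`. -/
def rVal (k n : ℕ) : ℚ :=
  ∏ j ∈ Finset.Icc 1 k, (((n : ℚ) + (j : ℚ)) / (j : ℚ)) ^ (min j (k - j))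

/-- The power series expansion at `0` of the rational function `F_a^b(x)`, obtained by
applying the operator `X^(a-1) D^a` (first differentiate `a` times, then multiply by
`x^(a-1)`) `b` times to `1/(1-x)`. -/
noncomputable def Fab (a b : ℕ) : PowerSeries ℚ :=
  (fun f => PowerSeries.X ^ (a - 1) * (PowerSeries.derivativeFun^[a] f))^[b]
    ((1 - PowerSeries.X : PowerSeries ℚ)⁻¹)

/-!
The exponent `min(j, 2k - j)` is the number of pairs `(i, t) ∈ [0, k)²` with `i + t + 1 = j`,
so the numerator `∏_j (n + j)^min(j, 2k-j)` of `r_{2k}(n)` regroups as the product of the rising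
factorials `(n + i + 1)^(k)`, `i < k`; the denominator is its value at `n = 0`, which equals
`∏_{j<k} (k + j)!/j!`.

On the other side, `X^(k-1) D^k` turns the coefficient of `x^(k-1+n+1)` into that of `x^(k-1+n)`,
multiplied by `(n + 1)^(k)`. Starting from `1/(1-x)`, whose coefficients are all `1`, `k`
applications give the coefficient `∏_{i<k} (n + i + 1)^(k)` of `x^(k-1+n)` in `F_k^k`.
-/

open Finset PowerSeries

theorem card_filter_add_add_one_eq (k j : ℕ) :
    #{p ∈ range k ×ˢ range k | p.1 + p.2 + 1 = j} = min j (2 * k - j) := by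
  have hfiber : {p ∈ range k ×ˢ range k | p.1 + p.2 + 1 = j}
      = (Ico (j - k) (min j k)).image fun i => (i, j - 1 - i) := by
    ext ⟨i, t⟩
    simp only [mem_filter, mem_product, mem_range, mem_image, mem_Ico, Prod.mk.injEq]
    constructor
    · rintro ⟨⟨hi, ht⟩, hsum⟩
      exact ⟨i, by omega, rfl, by omega⟩
    · rintro ⟨i, hi, rfl, rfl⟩
      omega
  rw [hfiber, card_image_of_injective _ fun _ _ h => (Prod.mk.inj h).1, Nat.card_Ico]
  omega

theorem prod_Icc_pow_min_eq_prod_range_prod_range {M : Type*} [CommMonoid M] (k : ℕ)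
    (f : ℕ → M) :
    ∏ j ∈ Icc 1 (2 * k), f j ^ min j (2 * k - j)
      = ∏ i ∈ range k, ∏ t ∈ range k, f (i + t + 1) := by
  have hmaps : ∀ p ∈ range k ×ˢ range k, p.1 + p.2 + 1 ∈ Icc 1 (2 * k) := by
    rintro ⟨i, t⟩ hp
    simp only [mem_product, mem_range] at hp
    simp only [mem_Icc]
    omega
  calc ∏ j ∈ Icc 1 (2 * k), f j ^ min j (2 * k - j)
      = ∏ j ∈ Icc 1 (2 * k), ∏ p ∈ range k ×ˢ range k with p.1 + p.2 + 1 = j, f j := by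
        refine prod_congr rfl fun j _ => ?_
        rw [prod_const, card_filter_add_add_one_eq]
    _ = ∏ p ∈ range k ×ˢ range k, f (p.1 + p.2 + 1) := prod_fiberwise_of_maps_to' hmaps f
    _ = ∏ i ∈ range k, ∏ t ∈ range k, f (i + t + 1) := prod_product _ _ _

theorem prod_Icc_pow_min_eq_prod_ascFactorial (k n : ℕ) :
    ∏ j ∈ Icc 1 (2 * k), ((n : ℚ) + j) ^ min j (2 * k - j)
      = ∏ i ∈ range k, ((n + i + 1).ascFactorial k : ℚ) := by
  rw [prod_Icc_pow_min_eq_prod_range_prod_range]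
  refine prod_congr rfl fun i _ => ?_
  rw [Nat.ascFactorial_eq_prod_range]
  push_cast
  exact prod_congr rfl fun t _ => by ring

theorem rVal_two_mul (k n : ℕ) :
    rVal (2 * k) n
      = (∏ i ∈ range k, ((n + i + 1).ascFactorial k : ℚ))
        / ∏ i ∈ range k, ((i + 1).ascFactorial k : ℚ) := by
  have hden := prod_Icc_pow_min_eq_prod_ascFactorial k 0
  simp only [Nat.cast_zero, zero_add] at hden
  rw [rVal]
  simp only [div_pow]
  rw [prod_div_distrib, prod_Icc_pow_min_eq_prod_ascFactorial, hden]

theorem prod_factorial_div_factorial_add (k : ℕ) :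
    ∏ j ∈ range k, (j.factorial : ℚ) / ((k + j).factorial : ℚ)
      = (∏ i ∈ range k, ((i + 1).ascFactorial k : ℚ))⁻¹ := by
  rw [← prod_inv_distrib]
  refine prod_congr rfl fun j _ => ?_
  have hfac : (j.factorial : ℚ) * (j + 1).ascFactorial k = (k + j).factorial := by
    rw [add_comm k j]
    exact_mod_cast Nat.factorial_mul_ascFactorial j k
  have hasc : ((j + 1).ascFactorial k : ℚ) ≠ 0 := by
    exact_mod_cast (Nat.ascFactorial_pos j k).ne'
  rw [← hfac]
  field_simp

theorem rVal_two_mul_eq_mul_prod_ascFactorial (k n : ℕ) :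
    rVal (2 * k) n
      = (∏ j ∈ range k, (j.factorial : ℚ) / ((k + j).factorial : ℚ))
        * ∏ i ∈ range k, ((n + i + 1).ascFactorial k : ℚ) := by
  rw [rVal_two_mul, prod_factorial_div_factorial_add, div_eq_mul_inv, mul_comm]

theorem Fab_zero (a : ℕ) : Fab a 0 = PowerSeries.mk 1 := by
  rw [Fab, Function.iterate_zero_apply, PowerSeries.inv_eq_iff_mul_eq_one (by simp)]
  exact mk_one_mul_one_sub_eq_one ℚ

-- `derivativeFun` is by definition the underlying function of `d⁄dX ℚ`.
theorem Fab_succ (a b : ℕ) : Fab a (b + 1) = X ^ (a - 1) * (d⁄dX ℚ)^[a] (Fab a b) :=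
  Function.iterate_succ_apply' _ _ _

theorem coeff_Fab {a : ℕ} (ha : 1 ≤ a) (b n : ℕ) :
    coeff (n + (a - 1)) (Fab a b) = ∏ i ∈ range b, ((n + i + 1).ascFactorial a : ℚ) := by
  induction b generalizing n with
  | zero => simp [Fab_zero]
  | succ b ih =>
    rw [Fab_succ, coeff_X_pow_mul, coeff_iterate_derivative,
      show n + a = n + 1 + (a - 1) by omega, ih, prod_range_succ']
    simp only [add_assoc, add_comm 1, add_zero]
    ring

theorem Fab_eq_X_pow_mul_mk {a b : ℕ} (ha : 1 ≤ a) (hb : 1 ≤ b) :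
    Fab a b = X ^ (a - 1) *
      PowerSeries.mk fun n => ∏ i ∈ range b, ((n + i + 1).ascFactorial a : ℚ) := by
  obtain ⟨b, rfl⟩ : ∃ c, b = c + 1 := ⟨b - 1, by omega⟩
  ext m
  rw [coeff_X_pow_mul']
  split_ifs with hm
  · rw [coeff_mk, ← coeff_Fab ha, Nat.sub_add_cancel hm]
  · rw [Fab_succ, coeff_X_pow_mul', if_neg hm]

/-- For `k ≥ 1`, the formal power series `Σ_{n ≥ 0} r_{2k}(n)·x^(n+k-1)` equals
`∏_{j=0}^{k-1} (j!/(k+j)!)` times the power series expansion at `0` of `F_k^k(x)`. -/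
theorem stmt12 (k : ℕ) (hk : 1 ≤ k) :
    (PowerSeries.mk fun m => if k - 1 ≤ m then rVal (2 * k) (m - (k - 1)) else 0)
      = PowerSeries.C
          (∏ j ∈ Finset.range k, (j.factorial : ℚ) / ((k + j).factorial : ℚ))
        * Fab k k := by
  calc (PowerSeries.mk fun m => if k - 1 ≤ m then rVal (2 * k) (m - (k - 1)) else 0)
      = X ^ (k - 1) * PowerSeries.mk (rVal (2 * k)) := by
        ext m
        rw [coeff_mk, coeff_X_pow_mul', coeff_mk]
    _ = X ^ (k - 1) * (C (∏ j ∈ range k, (j.factorial : ℚ) / ((k + j).factorial : ℚ))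
          * PowerSeries.mk fun n => ∏ i ∈ range k, ((n + i + 1).ascFactorial k : ℚ)) := by
        congr 1
        ext n
        rw [coeff_mk, coeff_C_mul, coeff_mk, rVal_two_mul_eq_mul_prod_ascFactorial]
    _ = _ := by
        rw [Fab_eq_X_pow_mul_mk hk hk]
        ring
end

section
/- Fix a natural number k ≥ 0 and let A_{2k+1}(x) := (1-x)^{k²+k+1} · Σ_{n≥0} r_{2k+1}(n)·x^n, which is a polynomial of degree k²-k (degree 0 when k = 0). Define B⁰(x) := (1/2)·( A_{2k+1}(x)·(1+x)^{k²+k+1} + A_{2k+1}(-x)·(1-x)^{k²+k+1} ) and B¹(x) := (1/(2x))·( A_{2k+1}(x)·(1+x)^{k²+k+1} − A_{2k+1}(-x)·(1-x)^{k²+k+1} ). Then B⁰ and B¹ are polynomials of degree 2k², and B¹(x) = x^{2k²}·B⁰(1/x). -/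
/-!
Put `p = r_{2k+1}` and `N = k² + k + 1`. The coefficients of `A` are
`a_n = ∑_{i ≤ n} (-1)^i C(N, i) p(n - i)`, and since `deg p = N - 1`, the sum over all `i ≤ N`
is an `N`-th finite difference of `p`, hence zero. As `p` vanishes at `-1, …, -2k` and satisfies
`p(-(2k+1) - x) = p(x)`, the part of that vanishing sum with `i > n` is `(-1)^N a_{k²-k-n}`, so
`a_n = a_{k²-k-n}`. Hence `C = A·(1+X)^N` is palindromic of odd degree `2k² + 1`; `B⁰` and `X·B¹`
are its even and odd parts, and reflecting the coefficients of `C` exchanges them, which gives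
`B¹ = X^{2k²}·B⁰(1/X)`. The top coefficients are `C_{2k²} = C_1 = p(1) > 0` and the leading
coefficient of `C`.
-/

open Polynomial Finset

theorem coeff_comp_neg_X {R : Type*} [CommRing R] (p : R[X]) (n : ℕ) :
    (p.comp (-X)).coeff n = (-1) ^ n * p.coeff n := by
  rw [← neg_one_mul, ← C_1, ← C_neg, comp_C_mul_X_coeff, mul_comm]

theorem reflect_eq_self_of_coeff_sub {R : Type*} [Semiring R] {p : R[X]} {n : ℕ}
    (h : ∀ i ≤ n, p.coeff (n - i) = p.coeff i) : reflect n p = p := by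
  ext i
  rw [coeff_reflect]
  rcases le_or_gt i n with hi | hi
  · rw [revAt_le hi, h i hi]
  · rw [revAt_eq_self_of_lt hi]

theorem natDegree_one_add_X_pow (R : Type*) [Semiring R] [Nontrivial R] (n : ℕ) :
    ((1 + X : R[X]) ^ n).natDegree = n := by
  rw [add_comm, ← C_1, (monic_X_add_C 1).natDegree_pow, natDegree_X_add_C, mul_one]

theorem reflect_mul_one_add_X_pow {R : Type*} [Semiring R] {p : R[X]} {m : ℕ}
    (hdeg : p.natDegree ≤ m) (hp : reflect m p = p) (n : ℕ) :
    reflect (m + n) (p * (1 + X) ^ n) = p * (1 + X) ^ n := by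
  have hpow : reflect n ((1 + X : R[X]) ^ n) = (1 + X) ^ n :=
    reflect_eq_self_of_coeff_sub fun i hi => by
      rw [coeff_one_add_X_pow, coeff_one_add_X_pow, Nat.choose_symm hi]
  have hpow_deg : ((1 + X : R[X]) ^ n).natDegree ≤ n :=
    (natDegree_pow_le_of_le n ((natDegree_add_le _ _).trans
      (max_le (natDegree_one.trans_le zero_le_one) natDegree_X_le))).trans (mul_one n).le
  rw [reflect_mul _ _ hdeg hpow_deg, hp, hpow]

theorem PowerSeries.coeff_one_sub_X_pow {R : Type*} [CommRing R] (N n : ℕ) :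
    coeff n ((1 - X : PowerSeries R) ^ N) = (-1) ^ n * N.choose n := by
  have h : (1 - X : PowerSeries R) ^ N =
      (((1 + Polynomial.X : R[X]) ^ N).comp (-Polynomial.X) : R[X]) := by
    simp [sub_eq_add_neg]
  rw [h, Polynomial.coeff_coe, coeff_comp_neg_X, coeff_one_add_X_pow]

section HStar

variable {R : Type*} [CommRing R]

theorem sum_range_neg_one_pow_mul_choose_mul_eval_sub_eq_zero
    {p : R[X]} {n : ℕ} (hp : p.natDegree < n) (x : R) :
    ∑ i ∈ range (n + 1), (-1) ^ i * (n.choose i : R) * p.eval (x - i) = 0 := by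
  have h := congr_fun (fwdDiff_iter_eq_zero_of_degree_lt hp) (x - n)
  rw [fwdDiff_iter_eq_sum_shift, Pi.zero_apply] at h
  rw [← h, ← sum_range_reflect]
  refine sum_congr rfl fun i hi => ?_
  have hi : i ≤ n := Nat.lt_succ_iff.mp (mem_range.mp hi)
  rw [Nat.add_sub_cancel, Nat.choose_symm hi, zsmul_eq_mul, Nat.cast_sub hi]
  push_cast
  ring_nf

-- The coefficients of the `h*`-polynomial `(1 - X)^N · ∑ₘ p(m) Xᵐ` of `p`.
def hStarCoeff (N : ℕ) (p : R[X]) (n : ℕ) : R :=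
  ∑ i ∈ range (n + 1), (-1) ^ i * (N.choose i : R) * p.eval ((n : R) - i)

theorem coeff_one_sub_X_pow_mul_mk_eval (N n : ℕ) (p : R[X]) :
    PowerSeries.coeff n ((1 - PowerSeries.X) ^ N * PowerSeries.mk fun m => p.eval (m : R)) =
      hStarCoeff N p n := by
  rw [PowerSeries.coeff_mul, Nat.sum_antidiagonal_eq_sum_range_succ_mk, hStarCoeff]
  refine sum_congr rfl fun i hi => ?_
  rw [PowerSeries.coeff_one_sub_X_pow, PowerSeries.coeff_mk,
    Nat.cast_sub (Nat.lt_succ_iff.mp (mem_range.mp hi))]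

theorem hStarCoeff_eq_neg_one_pow_mul {p : R[X]} {N m a b : ℕ} (hdeg : p.natDegree < N)
    (hzero : ∀ j ∈ Icc 1 m, p.eval (-(j : R)) = 0)
    (hsymm : ∀ t : ℕ, p.eval (-(m + 1 : R) - t) = p.eval (t : R)) (hab : a + m + 1 + b = N) :
    hStarCoeff N p a = (-1) ^ (N + 1) * hStarCoeff N p b := by
  set f : ℕ → R := fun i => (-1) ^ i * (N.choose i : R) * p.eval ((a : R) - i)
  have htotal : ∑ i ∈ range (a + 1 + m + (b + 1)), f i = 0 := by
    rw [show a + 1 + m + (b + 1) = N + 1 by omega]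
    exact sum_range_neg_one_pow_mul_choose_mul_eval_sub_eq_zero hdeg a
  have hgap : ∑ j ∈ range m, f (a + 1 + j) = 0 := by
    refine sum_eq_zero fun j hj => ?_
    have hj : j + 1 ∈ Icc 1 m := by simp only [mem_Icc]; have := mem_range.mp hj; omega
    have harg : (a : R) - ((a + 1 + j : ℕ) : R) = -((j + 1 : ℕ) : R) := by push_cast; ring
    simp only [f, harg, hzero _ hj, mul_zero]
  have htail : ∑ t ∈ range (b + 1), f (a + 1 + m + t) = (-1) ^ N * hStarCoeff N p b := by
    rw [hStarCoeff, mul_sum]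
    conv_rhs => rw [← sum_range_reflect]
    refine sum_congr rfl fun t ht => ?_
    obtain ⟨s, rfl⟩ : ∃ s, b = t + s :=
      Nat.exists_eq_add_of_le (Nat.lt_succ_iff.mp (mem_range.mp ht))
    have hidx : t + s + 1 - 1 - t = s := by omega
    have hchoose : N.choose (a + 1 + m + t) = N.choose s := by
      rw [← Nat.choose_symm (by omega)]; congr 1; omega
    have harg : (a : R) - ((a + 1 + m + t : ℕ) : R) = -(m + 1 : R) - t := by push_cast; ring
    have hsign : ((-1 : R)) ^ (a + 1 + m + t) = (-1) ^ N * (-1) ^ s := by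
      rw [← hab, ← pow_add, show a + m + 1 + (t + s) + s = a + 1 + m + t + 2 * s by ring,
        pow_add _ (a + 1 + m + t), pow_mul, neg_one_sq, one_pow, mul_one]
    simp only [f]
    rw [hchoose, harg, hsymm, hsign, hidx, Nat.cast_add, add_sub_cancel_right]
    ring
  rw [sum_range_add, sum_range_add, hgap, htail, add_zero] at htotal
  rw [hStarCoeff]
  linear_combination htotal

theorem coeff_one_mul_one_add_X_pow_eq_eval_one {A p : R[X]} {N : ℕ}
    (hA : ∀ n, A.coeff n = hStarCoeff N p n) : (A * (1 + X) ^ N).coeff 1 = p.eval 1 := by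
  rw [coeff_mul, Nat.sum_antidiagonal_eq_sum_range_succ_mk]
  simp only [hA, hStarCoeff, sum_range_succ, range_zero, sum_empty, coeff_one_add_X_pow,
    Nat.choose_zero_right, Nat.choose_one_right, Nat.cast_zero, Nat.cast_one,
    pow_zero, pow_one, zero_add, sub_zero, sub_self, tsub_zero, tsub_self]
  ring

end HStar

section EvenOdd

variable {K : Type*} [Field K]

noncomputable def evenPart (p : K[X]) : K[X] := (1 / 2 : K) • (p + p.comp (-X))

noncomputable def oddPart (p : K[X]) : K[X] := ((1 / 2 : K) • (p - p.comp (-X))).divX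

theorem X_mul_oddPart (p : K[X]) : X * oddPart p = (1 / 2 : K) • (p - p.comp (-X)) := by
  have h0 : ((1 / 2 : K) • (p - p.comp (-X))).coeff 0 = 0 := by simp [coeff_comp_neg_X]
  rw [oddPart, ← add_zero (X * _), ← C_0, ← h0, X_mul_divX_add]

variable [NeZero (2 : K)]

theorem coeff_evenPart (p : K[X]) (n : ℕ) :
    (evenPart p).coeff n = if Even n then p.coeff n else 0 := by
  rcases Nat.even_or_odd n with hn | hn
  · rw [evenPart, coeff_smul, coeff_add, coeff_comp_neg_X, hn.neg_one_pow, if_pos hn, smul_eq_mul]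
    field_simp
    ring
  · rw [evenPart, coeff_smul, coeff_add, coeff_comp_neg_X, hn.neg_one_pow,
      if_neg (Nat.not_even_iff_odd.mpr hn)]
    simp

theorem coeff_oddPart (p : K[X]) (n : ℕ) :
    (oddPart p).coeff n = if Even n then p.coeff (n + 1) else 0 := by
  rcases Nat.even_or_odd n with hn | hn
  · rw [oddPart, coeff_divX, coeff_smul, coeff_sub, coeff_comp_neg_X, hn.add_one.neg_one_pow,
      if_pos hn, smul_eq_mul]
    field_simp
    ring
  · rw [oddPart, coeff_divX, coeff_smul, coeff_sub, coeff_comp_neg_X, hn.add_one.neg_one_pow,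
      if_neg (Nat.not_even_iff_odd.mpr hn)]
    simp

variable {p : K[X]} {d : ℕ}

theorem reflect_evenPart (hdeg : p.natDegree ≤ 2 * d + 1) (hp : reflect (2 * d + 1) p = p) :
    reflect (2 * d) (evenPart p) = oddPart p := by
  ext n
  rw [coeff_reflect, coeff_oddPart]
  rcases le_or_gt n (2 * d) with hn | hn
  · have hsymm : p.coeff (n + 1) = p.coeff (2 * d - n) := by
      conv_lhs => rw [← hp]
      rw [coeff_reflect, revAt_le (by omega), show 2 * d + 1 - (n + 1) = 2 * d - n by omega]
    have hpar : Even (2 * d - n) ↔ Even n := by rw [Nat.even_sub hn]; simp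
    rw [revAt_le hn, coeff_evenPart, hsymm]
    simp only [hpar]
  · rw [revAt_eq_self_of_lt hn, coeff_evenPart,
      coeff_eq_zero_of_natDegree_lt (by omega : _ < n + 1)]
    split_ifs with he
    · obtain ⟨r, rfl⟩ := he
      exact coeff_eq_zero_of_natDegree_lt (by omega)
    · rfl

theorem degree_evenPart (hdeg : p.natDegree ≤ 2 * d + 1) (h : p.coeff (2 * d) ≠ 0) :
    (evenPart p).degree = (2 * d : ℕ) := by
  refine degree_eq_of_le_of_coeff_ne_zero ((degree_le_iff_coeff_zero _ _).mpr fun n hn => ?_) ?_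
  · have hn : 2 * d < n := by exact_mod_cast hn
    rw [coeff_evenPart]
    split_ifs with he
    · obtain ⟨r, rfl⟩ := he
      exact coeff_eq_zero_of_natDegree_lt (by omega)
    · rfl
  · rwa [coeff_evenPart, if_pos (even_two_mul d)]

theorem degree_oddPart (hdeg : p.natDegree ≤ 2 * d + 1) (h : p.coeff (2 * d + 1) ≠ 0) :
    (oddPart p).degree = (2 * d : ℕ) := by
  refine degree_eq_of_le_of_coeff_ne_zero ((degree_le_iff_coeff_zero _ _).mpr fun n hn => ?_) ?_
  · have hn : 2 * d < n := by exact_mod_cast hn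
    rw [coeff_oddPart, coeff_eq_zero_of_natDegree_lt (by omega), ite_self]
  · rwa [coeff_oddPart, if_pos (even_two_mul d)]

end EvenOdd

theorem prod_Icc_pow_min_eq_prod_range {M : Type*} [CommMonoid M] (n : ℕ) (f : ℕ → M) :
    ∏ j ∈ Icc 1 n, f j ^ min j (n - j) = ∏ j ∈ range (n + 1), f j ^ min j (n - j) := by
  refine prod_subset (fun j hj => ?_) (fun j hj hj' => ?_)
  · simp only [mem_Icc, mem_range] at hj ⊢; omega
  · obtain rfl : j = 0 := by simp only [mem_Icc, mem_range] at hj hj'; omega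
    simp

theorem prod_range_pow_min_reflect {M : Type*} [CommMonoid M] (n : ℕ) (f : ℕ → M) :
    ∏ j ∈ range (n + 1), f (n - j) ^ min j (n - j) =
      ∏ j ∈ range (n + 1), f j ^ min j (n - j) := by
  rw [← prod_range_reflect]
  refine prod_congr rfl fun j hj => ?_
  have hj : j ≤ n := Nat.lt_succ_iff.mp (mem_range.mp hj)
  rw [Nat.add_sub_cancel, Nat.sub_sub_self hj, min_comm]

theorem sum_range_min_two_mul_add_one_sub (k : ℕ) :
    ∑ j ∈ range (2 * k + 1 + 1), min j (2 * k + 1 - j) = k * (k + 1) := by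
  have hlow : ∀ j ∈ range (k + 1), min j (2 * k + 1 - j) = j := fun j hj => by
    have := mem_range.mp hj; omega
  have hhigh : ∀ j ∈ range (k + 1),
      min (k + 1 + j) (2 * k + 1 - (k + 1 + j)) = k + 1 - 1 - j :=
    fun j hj => by have := mem_range.mp hj; omega
  have hgauss := sum_range_id_mul_two (k + 1)
  rw [show 2 * k + 1 + 1 = (k + 1) + (k + 1) by ring, sum_range_add, sum_congr rfl hlow,
    sum_congr rfl hhigh, sum_range_reflect (fun j => j)]
  rw [Nat.add_sub_cancel] at hgauss
  linarith

noncomputable def rPoly (n : ℕ) : ℚ[X] :=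
  ∏ j ∈ Icc 1 n, (C (j : ℚ)⁻¹ * (X + C (j : ℚ))) ^ min j (n - j)

theorem eval_rPoly (n : ℕ) (x : ℚ) :
    (rPoly n).eval x = ∏ j ∈ Icc 1 n, ((x + j) / j) ^ min j (n - j) := by
  simp only [rPoly, eval_prod, eval_pow, eval_mul, eval_C, eval_add, eval_X, div_eq_inv_mul]

theorem eval_rPoly_natCast (n m : ℕ) : (rPoly n).eval (m : ℚ) = rVal n m :=
  eval_rPoly n m

theorem natDegree_rPoly_le (n : ℕ) :
    (rPoly n).natDegree ≤ ∑ j ∈ range (n + 1), min j (n - j) := by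
  have hlin (j : ℕ) : (C (j : ℚ)⁻¹ * (X + C (j : ℚ))).natDegree ≤ 1 :=
    natDegree_C_mul_le _ _ |>.trans (natDegree_X_add_C _).le
  calc (rPoly n).natDegree
      ≤ ∑ j ∈ Icc 1 n, (C (j : ℚ)⁻¹ * (X + C (j : ℚ))).natDegree * min j (n - j) := by
        refine (natDegree_prod_le _ _).trans (sum_le_sum fun j _ => natDegree_pow_le.trans ?_)
        rw [mul_comm]
    _ ≤ ∑ j ∈ Icc 1 n, min j (n - j) :=
        sum_le_sum fun j _ => (Nat.mul_le_mul_right _ (hlin j)).trans (one_mul _).le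
    _ ≤ ∑ j ∈ range (n + 1), min j (n - j) :=
        sum_le_sum_of_subset fun j hj => by simp only [mem_Icc, mem_range] at hj ⊢; omega

theorem eval_rPoly_neg_natCast {n j : ℕ} (hj : 1 ≤ j) (hjn : j < n) :
    (rPoly n).eval (-(j : ℚ)) = 0 := by
  rw [eval_rPoly]
  refine prod_eq_zero (i := j) (mem_Icc.mpr ⟨hj, hjn.le⟩) ?_
  rw [neg_add_cancel, zero_div, zero_pow (by omega)]

theorem eval_rPoly_one_pos (n : ℕ) : 0 < (rPoly n).eval 1 := by
  rw [eval_rPoly]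
  refine prod_pos fun j hj => ?_
  have : (0 : ℚ) < j := by exact_mod_cast (mem_Icc.mp hj).1
  positivity

theorem eval_rPoly_neg_sub (k : ℕ) (x : ℚ) :
    (rPoly (2 * k + 1)).eval (-(2 * k + 1 : ℚ) - x) = (rPoly (2 * k + 1)).eval x := by
  simp only [eval_rPoly, div_pow, prod_div_distrib]
  congr 1
  have hshift : ∀ j ∈ range (2 * k + 1 + 1),
      (-(2 * k + 1 : ℚ) - x + j) ^ min j (2 * k + 1 - j)
        = (fun i : ℕ => -(x + i)) (2 * k + 1 - j) ^ min j (2 * k + 1 - j) := fun j hj => by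
    dsimp only
    rw [Nat.cast_sub (Nat.lt_succ_iff.mp (mem_range.mp hj))]
    push_cast
    ring_nf
  have heven : Even (∑ j ∈ range (2 * k + 1 + 1), min j (2 * k + 1 - j)) := by
    rw [sum_range_min_two_mul_add_one_sub]; exact Nat.even_mul_succ_self k
  rw [prod_Icc_pow_min_eq_prod_range, prod_Icc_pow_min_eq_prod_range, prod_congr rfl hshift,
    prod_range_pow_min_reflect (2 * k + 1) fun i : ℕ => -(x + i)]
  simp only [neg_pow (x + _), prod_mul_distrib, prod_pow_eq_pow_sum, heven.neg_one_pow, one_mul]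

theorem hStarCoeff_rPoly_symm (k : ℕ) {a b : ℕ} (hab : a + b = k ^ 2 - k) :
    hStarCoeff (k ^ 2 + k + 1) (rPoly (2 * k + 1)) a =
      hStarCoeff (k ^ 2 + k + 1) (rPoly (2 * k + 1)) b := by
  have hk : k ≤ k ^ 2 := Nat.le_self_pow two_ne_zero k
  have hdeg := natDegree_rPoly_le (2 * k + 1)
  rw [sum_range_min_two_mul_add_one_sub] at hdeg
  have hsign : Even (k ^ 2 + k + 1 + 1) := by
    rw [show k ^ 2 + k + 1 + 1 = k * (k + 1) + 2 by ring]
    exact (Nat.even_mul_succ_self k).add even_two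
  rw [hStarCoeff_eq_neg_one_pow_mul (m := 2 * k) (a := a) (b := b) (by nlinarith)
    (fun j hj => eval_rPoly_neg_natCast (mem_Icc.mp hj).1 (by have := (mem_Icc.mp hj).2; omega))
    (fun t => by push_cast; exact eval_rPoly_neg_sub k t) (by omega), hsign.neg_one_pow, one_mul]

/-- Fix `k ≥ 0` and let `A = A_{2k+1}` be the polynomial (of degree `k²-k`) with
`A(x) = (1-x)^(k²+k+1)·Σ_{n≥0} r_{2k+1}(n)·x^n`.  Define
`B⁰(x) = ½(A(x)(1+x)^(k²+k+1) + A(-x)(1-x)^(k²+k+1))` and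
`B¹(x) = (1/(2x))(A(x)(1+x)^(k²+k+1) - A(-x)(1-x)^(k²+k+1))`.
Then `B⁰` and `B¹` are polynomials of degree `2k²` and `B¹(x) = x^(2k²)·B⁰(1/x)`
(i.e. `B¹` is the reversal of the coefficients of `B⁰`). -/
theorem stmt15 (k : ℕ) (A : Polynomial ℚ)
    (hA : (A : PowerSeries ℚ)
      = (1 - PowerSeries.X) ^ (k ^ 2 + k + 1) *
          PowerSeries.mk (fun n => rVal (2 * k + 1) n))
    (hAdeg : A.degree = (k ^ 2 - k : ℕ)) :
    ∃ B0 B1 : Polynomial ℚ,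
      B0 = (1 / 2 : ℚ) •
          (A * (1 + Polynomial.X) ^ (k ^ 2 + k + 1)
            + A.comp (-Polynomial.X) * (1 - Polynomial.X) ^ (k ^ 2 + k + 1))
        ∧ Polynomial.X * B1 = (1 / 2 : ℚ) •
          (A * (1 + Polynomial.X) ^ (k ^ 2 + k + 1)
            - A.comp (-Polynomial.X) * (1 - Polynomial.X) ^ (k ^ 2 + k + 1))
        ∧ B0.degree = (2 * k ^ 2 : ℕ)
        ∧ B1.degree = (2 * k ^ 2 : ℕ)
        ∧ B1 = Polynomial.reflect (2 * k ^ 2) B0 := by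
  have hk : k ≤ k ^ 2 := Nat.le_self_pow two_ne_zero k
  have hcoeff (n : ℕ) : A.coeff n = hStarCoeff (k ^ 2 + k + 1) (rPoly (2 * k + 1)) n := by
    rw [← coeff_one_sub_X_pow_mul_mk_eval, ← Polynomial.coeff_coe, hA]
    simp only [eval_rPoly_natCast]
  have hAdeg' : A.natDegree = k ^ 2 - k := natDegree_eq_of_degree_eq_some hAdeg
  have hApal : reflect (k ^ 2 - k) A = A := reflect_eq_self_of_coeff_sub fun i hi => by
    rw [hcoeff, hcoeff, hStarCoeff_rPoly_symm k (a := k ^ 2 - k - i) (b := i) (by omega)]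
  set B := A * (1 + X) ^ (k ^ 2 + k + 1)
  have hBdeg : B.natDegree = 2 * k ^ 2 + 1 := by
    have hpow := natDegree_one_add_X_pow ℚ (k ^ 2 + k + 1)
    rw [natDegree_mul (by rintro rfl; simp at hAdeg) (ne_zero_of_natDegree_gt (n := 0) (by omega)),
      hAdeg', hpow]
    omega
  have hBpal : reflect (2 * k ^ 2 + 1) B = B := by
    rw [show 2 * k ^ 2 + 1 = (k ^ 2 - k) + (k ^ 2 + k + 1) by omega]
    exact reflect_mul_one_add_X_pow hAdeg'.le hApal _
  have hBcoeff : B.coeff (2 * k ^ 2) ≠ 0 := by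
    conv_lhs => rw [← hBpal]
    rw [coeff_reflect, revAt_le (by omega), show 2 * k ^ 2 + 1 - 2 * k ^ 2 = 1 by omega,
      coeff_one_mul_one_add_X_pow_eq_eval_one hcoeff]
    exact (eval_rPoly_one_pos _).ne'
  have hBlead : B.coeff (2 * k ^ 2 + 1) ≠ 0 := by
    rw [← hBdeg]
    exact leadingCoeff_ne_zero.mpr (by rintro h; simp [h] at hBdeg)
  have hBcomp : B.comp (-X) = A.comp (-X) * (1 - X) ^ (k ^ 2 + k + 1) := by
    rw [mul_comp_neg_X, pow_comp, add_comp, one_comp, X_comp, ← sub_eq_add_neg]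
  exact ⟨evenPart B, oddPart B, by rw [evenPart, hBcomp], by rw [X_mul_oddPart, hBcomp],
    degree_evenPart hBdeg.le hBcoeff, degree_oddPart hBdeg.le hBlead,
    (reflect_evenPart hBdeg.le hBpal).symm⟩
end
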